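/- Fix positive integers m, w, d, a probability space Ω, and random hash functions h_1, …, h_d : Ω → (Fin m → Fin w) that are mutually independent, each pairwise uniform in the sense that for all distinct i, i' ∈ Fin m, P(h_j(i) = h_j(i')) ≤ 1/w. Let y ∈ ℝ^m have nonnegative entries with ‖y‖₁ ≤ k, and let ŷ_i = min_{1 ≤ j ≤ d} S(y)_{j, h_j(i)} be the count-min estimate of coordinate i. Let ε > 0 and δ ∈ (0,1). If w ≥ e·k/ε and d ≥ ln(m/δ), then with probability at least 1 − δ, simultaneously for every coordinate i ∈ Fin m, y_i ≤ ŷ_i ≤ y_i + ε. -/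

import Mathlib

/-!
Row `j` overestimates `y i` by its collision mass `X_j`, the total weight of the other
coordinates that `h j` sends to the bucket of `i`.
Pairwise uniformity gives `E[X_j] ≤ ‖y‖₁ / w ≤ ε / e`, so by Markov each row overshoots by
more than `ε` with probability at most `1/e`. The minimum overshoots only if every row does,
which by independence has probability at most `e^{-d}`; a union bound over the `m`
coordinates gives failure probability at most `m e^{-d} ≤ δ`. The lower bound `y i ≤ ŷ_i` holds pointwise since `y ≥ 0`.
-/

open Finset MeasureTheory ProbabilityTheory

/-- The count-min sketch of width `w` and depth `d` for `y : Fin m → ℝ`. -/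
noncomputable def cmSketch {m w d : ℕ} (h : Fin d → Fin m → Fin w)
    (y : Fin m → ℝ) (j : Fin d) (c : Fin w) : ℝ :=
  ∑ i ∈ Finset.univ.filter (fun i => h j i = c), y i

/-- The count-min estimate of coordinate `i`: `ŷ_i = min_j S(y)_{j, h j i}`. -/
noncomputable def cmEstimate {m w d : ℕ} (hd : 0 < d) (h : Fin d → Fin m → Fin w)
    (y : Fin m → ℝ) (i : Fin m) : ℝ :=
  Finset.univ.inf' ⟨⟨0, hd⟩, Finset.mem_univ _⟩ (fun j => cmSketch h y j (h j i))

section CollisionMass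

variable {α β : Type*} [Fintype α] [DecidableEq α] [DecidableEq β]

def collisionMass (g : α → β) (y : α → ℝ) (i : α) : ℝ :=
  ∑ i' ∈ univ.erase i, if g i' = g i then y i' else 0

lemma collisionMass_nonneg {y : α → ℝ} (hy : ∀ i, 0 ≤ y i) (g : α → β) (i : α) :
    0 ≤ collisionMass g y i :=
  sum_nonneg fun i' _ => by split_ifs <;> simp [hy i']

end CollisionMass

section Sketch

variable {m w d : ℕ}

lemma cmSketch_apply_self (h : Fin d → Fin m → Fin w) (y : Fin m → ℝ) (j : Fin d) (i : Fin m) :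
    cmSketch h y j (h j i) = y i + collisionMass (h j) y i := by
  rw [cmSketch, sum_filter, ← sum_erase_add _ _ (mem_univ i), if_pos rfl, collisionMass, add_comm]

lemma le_cmEstimate (hd : 0 < d) (h : Fin d → Fin m → Fin w) {y : Fin m → ℝ}
    (hy : ∀ i, 0 ≤ y i) (i : Fin m) : y i ≤ cmEstimate hd h y i :=
  le_inf' _ _ fun j _ => by
    rw [cmSketch_apply_self]
    linarith [collisionMass_nonneg hy (h j) i]

lemma cmEstimate_le_add_iff (hd : 0 < d) (h : Fin d → Fin m → Fin w) (y : Fin m → ℝ)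
    (i : Fin m) (ε : ℝ) :
    cmEstimate hd h y i ≤ y i + ε ↔ ∃ j, collisionMass (h j) y i ≤ ε :=
  (inf'_le_iff _).trans (by simp [cmSketch_apply_self])

end Sketch

section Probability

variable {Ω α β : Type*} [MeasurableSpace Ω] {μ : Measure Ω}
  [Fintype α] [DecidableEq α] [DecidableEq β] [MeasurableSpace β] [MeasurableEq β]
  {g : Ω → α → β} {y : α → ℝ} {i : α}

lemma lintegral_collisionMass_le (hg : Measurable g) (hy : ∀ i, 0 ≤ y i) {p : ℝ}
    (hp : ∀ i', i' ≠ i → μ {ω | g ω i' = g ω i} ≤ ENNReal.ofReal p) :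
    ∫⁻ ω, ENNReal.ofReal (collisionMass (g ω) y i) ∂μ ≤
      ENNReal.ofReal (∑ i', y i') * ENNReal.ofReal p := by
  have hcoll : ∀ i', MeasurableSet {ω | g ω i' = g ω i} := fun i' =>
    measurableSet_eq_fun hg.eval hg.eval
  calc ∫⁻ ω, ENNReal.ofReal (collisionMass (g ω) y i) ∂μ
      = ∫⁻ ω, ∑ i' ∈ univ.erase i,
          {ω | g ω i' = g ω i}.indicator (fun _ => ENNReal.ofReal (y i')) ω ∂μ := by
        refine lintegral_congr fun ω => ?_
        rw [collisionMass, ENNReal.ofReal_sum_of_nonneg fun i' _ => by split_ifs <;> simp [hy i']]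
        refine sum_congr rfl fun i' _ => ?_
        by_cases hc : g ω i' = g ω i <;> simp [hc]
    _ = ∑ i' ∈ univ.erase i, ENNReal.ofReal (y i') * μ {ω | g ω i' = g ω i} := by
        rw [lintegral_finsetSum _ fun i' _ => measurable_const.indicator (hcoll i')]
        simp only [lintegral_indicator_const (hcoll _)]
    _ ≤ ∑ i' ∈ univ.erase i, ENNReal.ofReal (y i') * ENNReal.ofReal p := by
        gcongr with i' hi'
        exact hp i' (ne_of_mem_erase hi')
    _ ≤ ENNReal.ofReal (∑ i', y i') * ENNReal.ofReal p := by
        rw [← sum_mul, ← ENNReal.ofReal_sum_of_nonneg fun i' _ => hy i']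
        gcongr
        · exact fun i' _ _ => hy i'
        · exact erase_subset _ _

lemma measure_collisionMass_gt_le (hg : Measurable g) (hy : ∀ i, 0 ≤ y i) {p : ℝ}
    (hp : ∀ i', i' ≠ i → μ {ω | g ω i' = g ω i} ≤ ENNReal.ofReal p) {ε : ℝ} (hε : 0 < ε) :
    μ {ω | ε < collisionMass (g ω) y i} ≤
      ENNReal.ofReal (∑ i', y i') * ENNReal.ofReal p / ENNReal.ofReal ε := by
  have hX : Measurable fun ω => ENNReal.ofReal (collisionMass (g ω) y i) :=
    (Finset.measurable_sum _ fun i' _ => Measurable.ite (measurableSet_eq_fun hg.eval hg.eval)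
      measurable_const measurable_const).ennreal_ofReal
  calc μ {ω | ε < collisionMass (g ω) y i}
      ≤ μ {ω | ENNReal.ofReal ε ≤ ENNReal.ofReal (collisionMass (g ω) y i)} :=
        measure_mono fun ω hω => ENNReal.ofReal_le_ofReal (le_of_lt hω)
    _ ≤ (∫⁻ ω, ENNReal.ofReal (collisionMass (g ω) y i) ∂μ) / ENNReal.ofReal ε :=
        meas_ge_le_lintegral_div hX.aemeasurable (by simpa using hε) ENNReal.ofReal_ne_top
    _ ≤ _ := by
        gcongr
        exact lintegral_collisionMass_le hg hy hp

lemma measure_collisionMass_gt_le_exp_neg_one (hg : Measurable g) (hy : ∀ i, 0 ≤ y i)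
    {w : ℕ} (hw : 0 < w) (hp : ∀ i', i' ≠ i → μ {ω | g ω i' = g ω i} ≤ 1 / w)
    {k ε : ℝ} (hk : ∑ i', y i' ≤ k) (hε : 0 < ε) (hwε : Real.exp 1 * k / ε ≤ w) :
    μ {ω | ε < collisionMass (g ω) y i} ≤ ENNReal.ofReal (Real.exp (-1)) := by
  have hw' : (0 : ℝ) < w := by exact_mod_cast hw
  have hinv : (1 / w : ENNReal) = ENNReal.ofReal (1 / w) := by
    rw [ENNReal.ofReal_div_of_pos hw', ENNReal.ofReal_one, ENNReal.ofReal_natCast]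
  refine (measure_collisionMass_gt_le hg hy (fun i' hi' => (hp i' hi').trans hinv.le) hε).trans ?_
  rw [← ENNReal.ofReal_mul (sum_nonneg fun i' _ => hy i'), ← ENNReal.ofReal_div_of_pos hε]
  refine ENNReal.ofReal_le_ofReal ?_
  rw [div_le_iff₀ hε] at hwε
  rw [mul_one_div, div_div, div_le_iff₀ (by positivity), Real.exp_neg, ← div_eq_inv_mul,
    le_div_iff₀ (Real.exp_pos 1)]
  nlinarith [Real.exp_pos 1]

end Probability

lemma ProbabilityTheory.iIndepFun.measure_iInter_preimage_le_pow {Ω ι β : Type*}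
    [MeasurableSpace Ω] {μ : Measure Ω} [Fintype ι] [MeasurableSpace β] {g : ι → Ω → β}
    (hindep : iIndepFun g μ) {A : Set β} (hA : MeasurableSet A) {q : ENNReal}
    (hq : ∀ j, μ (g j ⁻¹' A) ≤ q) :
    μ (⋂ j, g j ⁻¹' A) ≤ q ^ Fintype.card ι :=
  calc μ (⋂ j, g j ⁻¹' A) = ∏ j, μ (g j ⁻¹' A) := by
        simpa using hindep.measure_inter_preimage_eq_mul univ (sets := fun _ => A) fun _ _ => hA
    _ ≤ ∏ _j : ι, q := prod_le_prod' fun j _ => hq j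
    _ = q ^ Fintype.card ι := by simp

lemma MeasureTheory.one_sub_le_measure_compl {Ω : Type*} [MeasurableSpace Ω]
    {μ : Measure Ω} [IsProbabilityMeasure μ] {s : Set Ω} {r : ENNReal} (h : μ s ≤ r) :
    1 - r ≤ μ sᶜ := by
  rw [tsub_le_iff_right, ← measure_univ (μ := μ), ← Set.compl_union_self s]
  exact (measure_union_le sᶜ s).trans (add_le_add_right h _)

lemma mul_exp_neg_le_of_log_div_le {x δ t : ℝ} (hδ : 0 < δ) (h : Real.log (x / δ) ≤ t) :
    x * Real.exp (-t) ≤ δ := by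
  have hx : x / δ ≤ Real.exp t := (Real.le_exp_log _).trans (Real.exp_le_exp.2 h)
  rw [Real.exp_neg, ← div_eq_mul_inv, div_le_iff₀ (Real.exp_pos t)]
  rwa [div_le_iff₀ hδ, mul_comm] at hx

theorem cm_uniform_error_bound_general
    (m w d : ℕ) (hw : 0 < w) (hd : 0 < d)
    {Ω : Type*} [MeasureSpace Ω] [IsProbabilityMeasure (ℙ : Measure Ω)]
    (h : Fin d → Ω → Fin m → Fin w) (hmeas : ∀ j, Measurable (h j))
    (hindep : iIndepFun h ℙ)
    (hpair : ∀ (j : Fin d) (i i' : Fin m), i ≠ i' →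
        ℙ {ω | h j ω i = h j ω i'} ≤ 1 / w)
    (y : Fin m → ℝ) (hy : ∀ i, 0 ≤ y i) (k : ℝ) (hk : (∑ i, y i) ≤ k)
    (ε δ : ℝ) (hε : 0 < ε) (hδ0 : 0 < δ)
    (hwε : Real.exp 1 * k / ε ≤ w) (hdδ : Real.log (m / δ) ≤ d) :
    1 - ENNReal.ofReal δ ≤
      ℙ {ω | ∀ i : Fin m,
              y i ≤ cmEstimate hd (fun j => h j ω) y i ∧
              cmEstimate hd (fun j => h j ω) y i ≤ y i + ε} := by
  set bad : Fin m → Set Ω := fun i => ⋂ j, h j ⁻¹' {g | ε < collisionMass g y i}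
  have hbad : ∀ i, ℙ (bad i) ≤ ENNReal.ofReal (Real.exp (-d)) := fun i =>
    calc ℙ (bad i) ≤ ENNReal.ofReal (Real.exp (-1)) ^ d := by
          simpa using hindep.measure_iInter_preimage_le_pow .of_discrete fun j =>
            measure_collisionMass_gt_le_exp_neg_one (hmeas j) hy hw
              (fun i' hi' => hpair j i' i hi') hk hε hwε
      _ = ENNReal.ofReal (Real.exp (-d)) := by
          rw [← ENNReal.ofReal_pow (Real.exp_pos _).le, ← Real.exp_nat_mul, mul_neg_one]
  have hgood : {ω | ∀ i : Fin m, y i ≤ cmEstimate hd (fun j => h j ω) y i ∧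
      cmEstimate hd (fun j => h j ω) y i ≤ y i + ε} = (⋃ i, bad i)ᶜ := by
    ext ω
    simp [bad, le_cmEstimate hd _ hy, cmEstimate_le_add_iff]
  rw [hgood]
  refine one_sub_le_measure_compl ?_
  calc ℙ (⋃ i, bad i) ≤ ∑ i, ℙ (bad i) := measure_iUnion_fintype_le _ _
    _ ≤ ∑ _i : Fin m, ENNReal.ofReal (Real.exp (-d)) := sum_le_sum fun i _ => hbad i
    _ = ENNReal.ofReal (m * Real.exp (-d)) := by simp [ENNReal.ofReal_mul]
    _ ≤ ENNReal.ofReal δ := ENNReal.ofReal_le_ofReal (mul_exp_neg_le_of_log_div_le hδ0 hdδ)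

/-- For a nonnegative vector with `‖y‖₁ ≤ k`, independent pairwise-uniform
random hashes, `w ≥ e k / ε` and `d ≥ ln(m/δ)`: with probability at least
`1 - δ`, simultaneously for every coordinate `i`, `y i ≤ ŷ_i ≤ y i + ε`. -/
theorem cm_uniform_error_bound
    (m w d : ℕ) (hm : 0 < m) (hw : 0 < w) (hd : 0 < d)
    {Ω : Type*} [MeasureSpace Ω] [IsProbabilityMeasure (ℙ : Measure Ω)]
    (h : Fin d → Ω → Fin m → Fin w) (hmeas : ∀ j, Measurable (h j))
    (hindep : iIndepFun h ℙ)
    (hpair : ∀ (j : Fin d) (i i' : Fin m), i ≠ i' →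
        ℙ {ω | h j ω i = h j ω i'} ≤ 1 / w)
    (y : Fin m → ℝ) (hy : ∀ i, 0 ≤ y i) (k : ℝ) (hk : (∑ i, y i) ≤ k)
    (ε δ : ℝ) (hε : 0 < ε) (hδ0 : 0 < δ) (hδ1 : δ < 1)
    (hwε : Real.exp 1 * k / ε ≤ w) (hdδ : Real.log (m / δ) ≤ d) :
    1 - ENNReal.ofReal δ ≤
      ℙ {ω | ∀ i : Fin m,
              y i ≤ cmEstimate hd (fun j => h j ω) y i ∧
              cmEstimate hd (fun j => h j ω) y i ≤ y i + ε} :=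
  cm_uniform_error_bound_general m w d hw hd h hmeas hindep hpair y hy k hk ε δ hε hδ0 hwε hdδ
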